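/- arXiv:2602.18293 — 3 statements merged into one kernel-verified Lean document; each statement's English description precedes it below -/
import Mathlib

section
/- Let p ∈ (1, ∞), p ≠ 2, λ ≤ 0, and set φ(x) = (1/p) λ |λ|^{p-2} |x|^p on ℝ^d. Then the p-transform of φ, defined by φ^p(y) = inf_{x ∈ ℝ^d} { (1/p)|x - y|^p − φ(x) }, equals φ^p(y) = (1/p) g_p(λ) |y|^p, where g_p(λ) = (|λ|/(1+|λ|))^{p-1}, and the infimum is attained uniquely at x = y/(1+|λ|). -/
/-!
With `μ = |λ|` the objective is `(1/p) (‖x - y‖ ^ p + μ ^ (p - 1) ‖x‖ ^ p)`. For `a, b ≥ 0`, Jensen's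
inequality for `t ↦ t ^ p` gives `(μ / (1 + μ)) ^ (p - 1) (a + b) ^ p ≤ a ^ p + μ ^ (p - 1) b ^ p`,
with equality iff `a = μ b`; combined with `‖y‖ ≤ ‖x - y‖ + ‖x‖` this is the lower bound. Equality
in both steps puts `y - x` and `x` on a common ray with `‖y - x‖ = μ ‖x‖` (the Euclidean norm is
strictly convex), i.e. `y = (1 + μ) x`.
-/

namespace Real

variable {p μ a b : ℝ}

lemma rpow_eq_rpow_sub_one_mul (hp : p ≠ 0) (ha : 0 ≤ a) : a ^ p = a ^ (p - 1) * a := by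
  rw [← rpow_add_one' ha (by simpa using hp), sub_add_cancel]

lemma weighted_rpow_add_eq (hp : p ≠ 0) (hμ : 0 ≤ μ) (hb : 0 ≤ b) :
    (μ / (1 + μ)) ^ (p - 1) * (μ * b + b) ^ p = (μ * b) ^ p + μ ^ (p - 1) * b ^ p := by
  have h1μ : 0 < 1 + μ := by linarith
  rw [show μ * b + b = (1 + μ) * b by ring, div_rpow hμ h1μ.le, mul_rpow h1μ.le hb,
    mul_rpow hμ hb, rpow_eq_rpow_sub_one_mul (p := p) hp hμ,
    rpow_eq_rpow_sub_one_mul (p := p) hp h1μ.le]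
  have : (1 + μ) ^ (p - 1) ≠ 0 := (rpow_pos_of_pos h1μ _).ne'
  field_simp
  ring

/-- Jensen's inequality for `t ↦ t ^ p` at the points `(1 + μ) a / μ` and `(1 + μ) b`
with weights `μ / (1 + μ)` and `1 / (1 + μ)`, whose barycenter is `a + b`. -/
lemma weighted_rpow_add_lt (hp : 1 < p) (hμ : 0 ≤ μ) (ha : 0 ≤ a) (hb : 0 ≤ b)
    (hab : a ≠ μ * b) :
    (μ / (1 + μ)) ^ (p - 1) * (a + b) ^ p < a ^ p + μ ^ (p - 1) * b ^ p := by
  have hp1 : p - 1 ≠ 0 := by linarith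
  rcases hμ.eq_or_lt with rfl | hμ
  · have ha : 0 < a := ha.lt_of_ne (by simpa using hab.symm)
    simpa [zero_rpow hp1] using rpow_pos_of_pos ha p
  have h1μ : 0 < 1 + μ := by linarith
  have hne : (1 + μ) * a / μ ≠ (1 + μ) * b := by
    rw [Ne, div_eq_iff hμ.ne']
    contrapose! hab
    nlinarith
  have hsum : μ / (1 + μ) + 1 / (1 + μ) = 1 := by rw [← add_div, add_comm, div_self h1μ.ne']
  have hjensen := (strictConvexOn_rpow hp).2 (Set.mem_Ici.2 (by positivity))
    (Set.mem_Ici.2 (by positivity)) hne (by positivity) (by positivity) hsum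
  have hbary : μ / (1 + μ) * ((1 + μ) * a / μ) + 1 / (1 + μ) * ((1 + μ) * b) = a + b := by
    field_simp
  simp only [smul_eq_mul, hbary] at hjensen
  refine (mul_lt_mul_of_pos_left hjensen (rpow_pos_of_pos (by positivity) _)).trans_eq ?_
  rw [div_rpow (by positivity) hμ.le, div_rpow hμ.le h1μ.le, mul_rpow h1μ.le ha,
    mul_rpow h1μ.le hb, rpow_eq_rpow_sub_one_mul (p := p) (by linarith) hμ.le,
    rpow_eq_rpow_sub_one_mul (p := p) (by linarith) h1μ.le]
  have : (1 + μ) ^ (p - 1) ≠ 0 := (rpow_pos_of_pos h1μ _).ne'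
  have : μ ^ (p - 1) ≠ 0 := (rpow_pos_of_pos hμ _).ne'
  field_simp

lemma weighted_rpow_add_le (hp : 1 < p) (hμ : 0 ≤ μ) (ha : 0 ≤ a) (hb : 0 ≤ b) :
    (μ / (1 + μ)) ^ (p - 1) * (a + b) ^ p ≤ a ^ p + μ ^ (p - 1) * b ^ p := by
  by_cases hab : a = μ * b
  · subst hab
    exact (weighted_rpow_add_eq (by linarith) hμ hb).le
  · exact (weighted_rpow_add_lt hp hμ ha hb hab).le

lemma weighted_rpow_add_eq_iff (hp : 1 < p) (hμ : 0 ≤ μ) (ha : 0 ≤ a) (hb : 0 ≤ b) :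
    (μ / (1 + μ)) ^ (p - 1) * (a + b) ^ p = a ^ p + μ ^ (p - 1) * b ^ p ↔ a = μ * b := by
  refine ⟨fun h => ?_, fun h => h ▸ weighted_rpow_add_eq (by linarith) hμ hb⟩
  by_contra hab
  exact (weighted_rpow_add_lt hp hμ ha hb hab).ne h

end Real

section NormedSpace

open Real

variable {E : Type*} [SeminormedAddCommGroup E] {p μ : ℝ}

lemma weighted_rpow_norm_le_rpow_add (hp : 0 ≤ p) (hμ : 0 ≤ μ) (x y : E) :
    (μ / (1 + μ)) ^ (p - 1) * ‖y‖ ^ p ≤ (μ / (1 + μ)) ^ (p - 1) * (‖x - y‖ + ‖x‖) ^ p := by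
  have := norm_le_norm_add_norm_sub x y
  gcongr
  linarith

lemma weighted_rpow_norm_le (hp : 1 < p) (hμ : 0 ≤ μ) (x y : E) :
    (μ / (1 + μ)) ^ (p - 1) * ‖y‖ ^ p ≤ ‖x - y‖ ^ p + μ ^ (p - 1) * ‖x‖ ^ p :=
  (weighted_rpow_norm_le_rpow_add (by linarith) hμ x y).trans
    (weighted_rpow_add_le hp hμ (norm_nonneg _) (norm_nonneg _))

variable [NormedSpace ℝ E]

lemma weighted_rpow_norm_inv_one_add_smul (hp : 1 < p) (hμ : 0 ≤ μ) (y : E) :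
    ‖(1 + μ)⁻¹ • y - y‖ ^ p + μ ^ (p - 1) * ‖(1 + μ)⁻¹ • y‖ ^ p
      = (μ / (1 + μ)) ^ (p - 1) * ‖y‖ ^ p := by
  have h1μ : 0 < 1 + μ := by linarith
  have hnorm : ‖(1 + μ)⁻¹ • y‖ = (1 + μ)⁻¹ * ‖y‖ := by
    rw [norm_smul, Real.norm_of_nonneg (by positivity)]
  have hvec : (1 + μ)⁻¹ • y - y = -(μ • (1 + μ)⁻¹ • y) := by
    match_scalars
    field_simp
    ring
  have hsum : μ * ((1 + μ)⁻¹ * ‖y‖) + (1 + μ)⁻¹ * ‖y‖ = ‖y‖ := by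
    field_simp
    ring
  rw [hvec, norm_neg, norm_smul_of_nonneg hμ, hnorm,
    ← weighted_rpow_add_eq (by linarith) hμ (by positivity), hsum]

end NormedSpace

section StrictConvexSpace

open Real

variable {E : Type*} [NormedAddCommGroup E] [NormedSpace ℝ E] [StrictConvexSpace ℝ E]
  {p μ : ℝ} {x y : E}

lemma eq_inv_one_add_smul_of_norm_eq (hμ : 0 ≤ μ) (hxy : ‖x - y‖ = μ * ‖x‖)
    (hy : ‖y‖ = ‖x - y‖ + ‖x‖) : x = (1 + μ)⁻¹ • y := by
  have hray : SameRay ℝ (y - x) (μ • x) := by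
    refine SameRay.nonneg_smul_right ?_ hμ
    rw [sameRay_iff_norm_add, sub_add_cancel, norm_sub_rev, hy]
  have hyx : y - x = μ • x := hray.eq_of_norm_eq <| by
    rw [norm_sub_rev, hxy, norm_smul_of_nonneg hμ]
  rw [eq_inv_smul_iff₀ (by positivity), add_smul, one_smul, ← hyx, add_sub_cancel]

lemma eq_inv_one_add_smul_of_weighted_rpow_norm_eq (hp : 1 < p) (hμ : 0 ≤ μ)
    (h : ‖x - y‖ ^ p + μ ^ (p - 1) * ‖x‖ ^ p = (μ / (1 + μ)) ^ (p - 1) * ‖y‖ ^ p) :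
    x = (1 + μ)⁻¹ • y := by
  have htri := weighted_rpow_norm_le_rpow_add (by linarith : 0 ≤ p) hμ x y
  have hjensen := weighted_rpow_add_le hp hμ (norm_nonneg (x - y)) (norm_nonneg x)
  have hxy : ‖x - y‖ = μ * ‖x‖ :=
    (weighted_rpow_add_eq_iff hp hμ (norm_nonneg _) (norm_nonneg _)).1 (by linarith)
  rcases hμ.eq_or_lt with rfl | hμ
  · rw [zero_mul, norm_eq_zero, sub_eq_zero] at hxy
    rw [hxy, add_zero, inv_one, one_smul]
  refine eq_inv_one_add_smul_of_norm_eq hμ.le hxy ?_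
  have hK : 0 < (μ / (1 + μ)) ^ (p - 1) := rpow_pos_of_pos (by positivity) _
  refine rpow_left_injOn (by linarith : p ≠ 0) (norm_nonneg y)
    (show 0 ≤ ‖x - y‖ + ‖x‖ by positivity) ?_
  exact mul_left_cancel₀ hK.ne' (by linarith)

end StrictConvexSpace

theorem ptransform_of_neg_power_general
    (d : ℕ) (p lam : ℝ) (hp1 : 1 < p) (hlam : lam ≤ 0)
    (φ : EuclideanSpace ℝ (Fin d) → ℝ)
    (hφ : ∀ x, φ x = (1 / p) * lam * |lam| ^ (p - 2) * ‖x‖ ^ p)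
    (y : EuclideanSpace ℝ (Fin d)) :
    (∀ x, (1 / p) * (|lam| / (1 + |lam|)) ^ (p - 1) * ‖y‖ ^ p
        ≤ (1 / p) * ‖x - y‖ ^ p - φ x) ∧
    ((1 / p) * ‖(1 + |lam|)⁻¹ • y - y‖ ^ p - φ ((1 + |lam|)⁻¹ • y)
        = (1 / p) * (|lam| / (1 + |lam|)) ^ (p - 1) * ‖y‖ ^ p) ∧
    (∀ x, (1 / p) * ‖x - y‖ ^ p - φ x
        = (1 / p) * (|lam| / (1 + |lam|)) ^ (p - 1) * ‖y‖ ^ p →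
        x = (1 + |lam|)⁻¹ • y) := by
  have hμ : 0 ≤ |lam| := abs_nonneg lam
  have hp_inv : 0 < 1 / p := by positivity
  have hcoef : lam * |lam| ^ (p - 2) = -|lam| ^ (p - 1) := by
    rw [abs_of_nonpos hlam, show p - 1 = p - 2 + 1 by ring,
      Real.rpow_add_one' (neg_nonneg.2 hlam) (by linarith)]
    ring
  have hobj : ∀ x, (1 / p) * ‖x - y‖ ^ p - φ x
      = (1 / p) * (‖x - y‖ ^ p + |lam| ^ (p - 1) * ‖x‖ ^ p) := by
    intro x
    rw [hφ, mul_assoc (1 / p) lam, hcoef]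
    ring
  refine ⟨fun x => ?_, ?_, fun x hx => ?_⟩
  · rw [hobj, mul_assoc]
    exact mul_le_mul_of_nonneg_left (weighted_rpow_norm_le hp1 hμ x y) hp_inv.le
  · rw [hobj, weighted_rpow_norm_inv_one_add_smul hp1 hμ, mul_assoc]
  · rw [hobj, mul_assoc] at hx
    exact eq_inv_one_add_smul_of_weighted_rpow_norm_eq hp1 hμ (mul_left_cancel₀ hp_inv.ne' hx)

/-- The `p`-transform of `φ(x) = (1/p) λ |λ|^{p-2} |x|^p` with `λ ≤ 0` equals
`(1/p) (|λ|/(1+|λ|))^{p-1} |y|^p`, with the infimum uniquely attained at `y/(1+|λ|)`. -/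
theorem ptransform_of_neg_power
    (d : ℕ) (p lam : ℝ) (hp1 : 1 < p) (hp2 : p ≠ 2) (hlam : lam ≤ 0)
    (φ : EuclideanSpace ℝ (Fin d) → ℝ)
    (hφ : ∀ x, φ x = (1 / p) * lam * |lam| ^ (p - 2) * ‖x‖ ^ p)
    (y : EuclideanSpace ℝ (Fin d)) :
    (∀ x, (1 / p) * (|lam| / (1 + |lam|)) ^ (p - 1) * ‖y‖ ^ p
        ≤ (1 / p) * ‖x - y‖ ^ p - φ x) ∧
    ((1 / p) * ‖(1 + |lam|)⁻¹ • y - y‖ ^ p - φ ((1 + |lam|)⁻¹ • y)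
        = (1 / p) * (|lam| / (1 + |lam|)) ^ (p - 1) * ‖y‖ ^ p) ∧
    (∀ x, (1 / p) * ‖x - y‖ ^ p - φ x
        = (1 / p) * (|lam| / (1 + |lam|)) ^ (p - 1) * ‖y‖ ^ p →
        x = (1 + |lam|)⁻¹ • y) :=
  ptransform_of_neg_power_general d p lam hp1 hlam φ hφ y
end

section
/- Let p ∈ (1, ∞) and λ ≤ 0, and set φ(x) = −(1/p)|λ|^{p-1}|x|^p on ℝ^d. Then φ is p-concave, i.e. the double p-transform satisfies (φ^p)^p = φ. -/
/-!
Write `a = |λ|` and `c = a / (1 + a)`. The pair `φ = -(1/p) a^{p-1} ‖·‖^p`,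
`ψ = (1/p) c^{p-1} ‖·‖^p` satisfies `φ x + ψ y ≤ (1/p) ‖x - y‖^p` for all `x, y`, by the triangle
inequality and convexity of `t ↦ t^p` with weights `c` and `1 - c`, with equality at
`y = (1 + a) x`. Since `x ↦ (1 + a) x` is a bijection, both infima defining `φ^p` and `ψ^p` are
attained, so `φ^p = ψ` and `ψ^p = φ`.
-/

open Real

theorem Real.rpow_add_le_of_add_eq_one {p α β s t : ℝ} (hp : 1 ≤ p) (hα : 0 < α) (hβ : 0 < β)
    (hαβ : α + β = 1) (hs : 0 ≤ s) (ht : 0 ≤ t) :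
    (s + t) ^ p ≤ α ^ (1 - p) * s ^ p + β ^ (1 - p) * t ^ p := by
  have scale : ∀ {γ r : ℝ}, 0 < γ → 0 ≤ r → γ * (r / γ) ^ p = γ ^ (1 - p) * r ^ p := by
    intro γ r hγ hr
    rw [div_rpow hr hγ.le, rpow_sub hγ, rpow_one]
    field_simp
  calc (s + t) ^ p = (α * (s / α) + β * (t / β)) ^ p := by field_simp
    _ ≤ α * (s / α) ^ p + β * (t / β) ^ p :=
      (convexOn_rpow hp).2 (div_nonneg hs hα.le) (div_nonneg ht hβ.le) hα.le hβ.le hαβ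
    _ = α ^ (1 - p) * s ^ p + β ^ (1 - p) * t ^ p := by rw [scale hα hs, scale hβ ht]

section

variable {E : Type*} [SeminormedAddCommGroup E]

noncomputable def pTransform (p : ℝ) (f : E → ℝ) (y : E) : ℝ :=
  sInf {v : ℝ | ∃ x, v = 1 / p * ‖x - y‖ ^ p - f x}

theorem pTransform_eq_of_le_of_exists {p : ℝ} {f g : E → ℝ}
    (hle : ∀ x y, f x + g y ≤ 1 / p * ‖x - y‖ ^ p)
    (hex : ∀ y, ∃ x, f x + g y = 1 / p * ‖x - y‖ ^ p) :
    pTransform p f = g := by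
  funext y
  obtain ⟨x₀, hx₀⟩ := hex y
  refine IsLeast.csInf_eq ⟨⟨x₀, by linarith⟩, ?_⟩
  rintro v ⟨x, rfl⟩
  linarith [hle x y]

theorem pTransform_pTransform_eq_of_le_of_exists {p : ℝ} {f g : E → ℝ}
    (hle : ∀ x y, f x + g y ≤ 1 / p * ‖x - y‖ ^ p)
    (hf : ∀ y, ∃ x, f x + g y = 1 / p * ‖x - y‖ ^ p)
    (hg : ∀ x, ∃ y, f x + g y = 1 / p * ‖x - y‖ ^ p) :
    pTransform p (pTransform p f) = f := by
  rw [pTransform_eq_of_le_of_exists hle hf]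
  refine pTransform_eq_of_le_of_exists (fun y x => ?_) fun x => ?_
  · rw [norm_sub_rev, add_comm]
    exact hle x y
  · obtain ⟨y, hy⟩ := hg x
    exact ⟨y, by rw [norm_sub_rev, add_comm]; exact hy⟩

theorem rpow_div_one_add_mul_norm_rpow_le {p a : ℝ} (hp : 1 < p) (ha : 0 ≤ a) (x y : E) :
    (a / (1 + a)) ^ (p - 1) * ‖y‖ ^ p ≤ ‖x - y‖ ^ p + a ^ (p - 1) * ‖x‖ ^ p := by
  rcases ha.eq_or_lt with rfl | ha
  · simp only [zero_div, zero_rpow (sub_ne_zero.2 hp.ne'), zero_mul, add_zero]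
    positivity
  set c := a / (1 + a)
  have hc : 0 < c := by positivity
  have hc' : c * (1 + a) = a := div_mul_cancel₀ a (by positivity)
  have hc_inv : c ^ (p - 1) * c ^ (1 - p) = 1 := by
    rw [← rpow_add hc, show p - 1 + (1 - p) = 0 by ring, rpow_zero]
  have hc_one_sub : c ^ (p - 1) * (1 / (1 + a)) ^ (1 - p) = a ^ (p - 1) := by
    rw [one_div, inv_rpow (by positivity), ← rpow_neg (by positivity), neg_sub,
      ← mul_rpow hc.le (by positivity), hc']
  have htri : ‖y‖ ≤ ‖x - y‖ + ‖x‖ := by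
    simpa only [norm_sub_rev y x, add_comm] using norm_le_norm_add_norm_sub' y x
  calc c ^ (p - 1) * ‖y‖ ^ p ≤ c ^ (p - 1) * (‖x - y‖ + ‖x‖) ^ p := by gcongr
    _ ≤ c ^ (p - 1) * (c ^ (1 - p) * ‖x - y‖ ^ p + (1 / (1 + a)) ^ (1 - p) * ‖x‖ ^ p) := by
      gcongr
      exact rpow_add_le_of_add_eq_one hp.le hc (by positivity) (by field_simp; linarith)
        (norm_nonneg _) (norm_nonneg _)
    _ = ‖x - y‖ ^ p + a ^ (p - 1) * ‖x‖ ^ p := by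
      linear_combination ‖x - y‖ ^ p * hc_inv + ‖x‖ ^ p * hc_one_sub

theorem rpow_div_one_add_mul_norm_smul_rpow_eq [NormedSpace ℝ E] {p a : ℝ} (hp : p ≠ 0)
    (ha : 0 ≤ a) (x : E) :
    (a / (1 + a)) ^ (p - 1) * ‖(1 + a) • x‖ ^ p =
      ‖x - (1 + a) • x‖ ^ p + a ^ (p - 1) * ‖x‖ ^ p := by
  have hp' : p - 1 + 1 ≠ 0 := by simpa using hp
  have h1a : 0 < 1 + a := by linarith
  have hpow : ∀ {r : ℝ}, 0 ≤ r → r ^ p = r ^ (p - 1) * r := fun hr => by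
    rw [← rpow_add_one' hr hp', sub_add_cancel]
  have hc : (a / (1 + a)) ^ (p - 1) * (1 + a) ^ (p - 1) = a ^ (p - 1) := by
    rw [← mul_rpow (by positivity) h1a.le, div_mul_cancel₀ a h1a.ne']
  rw [show x - (1 + a) • x = (-a) • x by module, norm_smul, norm_smul, norm_neg, norm_of_nonneg ha,
    norm_of_nonneg h1a.le, mul_rpow h1a.le (norm_nonneg x), mul_rpow ha (norm_nonneg x),
    hpow ha, hpow h1a.le]
  linear_combination (1 + a) * ‖x‖ ^ p * hc

end

theorem pconcave_of_neg_power_general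
    (d : ℕ) (p lam : ℝ) (hp : 1 < p)
    (φ : EuclideanSpace ℝ (Fin d) → ℝ)
    (hφ : ∀ x, φ x = -(1 / p) * |lam| ^ (p - 1) * ‖x‖ ^ p)
    (ptransform : (EuclideanSpace ℝ (Fin d) → ℝ) → EuclideanSpace ℝ (Fin d) → ℝ)
    (hpt : ∀ f y, ptransform f y =
      sInf {v : ℝ | ∃ x, v = (1 / p) * ‖x - y‖ ^ p - f x}) :
    ptransform (ptransform φ) = φ := by
  obtain rfl : ptransform = pTransform p := funext fun f => funext (hpt f)
  set a := |lam|
  have ha : 0 ≤ a := abs_nonneg lam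
  have h1a : 1 + a ≠ 0 := by positivity
  let ψ : EuclideanSpace ℝ (Fin d) → ℝ := fun y => 1 / p * (a / (1 + a)) ^ (p - 1) * ‖y‖ ^ p
  have hattain : ∀ x, φ x + ψ ((1 + a) • x) = 1 / p * ‖x - (1 + a) • x‖ ^ p := fun x => by
    rw [hφ]
    linear_combination (1 / p) * rpow_div_one_add_mul_norm_smul_rpow_eq (by positivity) ha x
  refine pTransform_pTransform_eq_of_le_of_exists (g := ψ) (fun x y => ?_)
    (fun y => ⟨(1 + a)⁻¹ • y, by simpa [smul_inv_smul₀ h1a] using hattain ((1 + a)⁻¹ • y)⟩)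
    (fun x => ⟨(1 + a) • x, hattain x⟩)
  rw [hφ]
  linear_combination (1 / p) * rpow_div_one_add_mul_norm_rpow_le hp ha x y

/-- `φ(x) = -(1/p)|λ|^{p-1}|x|^p` with `λ ≤ 0` is `p`-concave: its double
`p`-transform equals itself. -/
theorem pconcave_of_neg_power
    (d : ℕ) (p lam : ℝ) (hp : 1 < p) (hlam : lam ≤ 0)
    (φ : EuclideanSpace ℝ (Fin d) → ℝ)
    (hφ : ∀ x, φ x = -(1 / p) * |lam| ^ (p - 1) * ‖x‖ ^ p)
    (ptransform : (EuclideanSpace ℝ (Fin d) → ℝ) → EuclideanSpace ℝ (Fin d) → ℝ)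
    (hpt : ∀ f y, ptransform f y =
      sInf {v : ℝ | ∃ x, v = (1 / p) * ‖x - y‖ ^ p - f x}) :
    ptransform (ptransform φ) = φ :=
  pconcave_of_neg_power_general d p lam hp φ hφ ptransform hpt
end

section
/- Let A_1, …, A_N be d×d matrices all of the block-diagonal form A_i = diag(Id_k, ζ_i Id_{d−k}) with ζ_i ≥ 0, let λ_1, …, λ_N > 0 sum to 1, and let p > 1. Then the minimizer over all d×d matrices B of ∑_{i=1}^N λ_i |A_i − B|^p (Frobenius norm) is the matrix B̄ = diag(Id_k, ζ̄ Id_{d−k}), where ζ̄ = x̄_p(ζ_1, …, ζ_N) is the one-dimensional Euclidean p-barycenter of ζ_1, …, ζ_N with weights λ_i. -/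
open Finset

/-- Decomposition of a sum of squared deviations around the mean. -/
lemma sum_sq_decomp {α : Type*} (s : Finset α) (t : α → ℝ) (c : ℝ) :
    ∑ a ∈ s, (c - t a) ^ 2 =
      (s.card : ℝ) * (c - (∑ a ∈ s, t a) / s.card) ^ 2
        + ∑ a ∈ s, (t a - (∑ a ∈ s, t a) / s.card) ^ 2 := by
  set n : ℝ := (s.card : ℝ) with hn
  set tb : ℝ := (∑ a ∈ s, t a) / n with htb
  have h : n * tb = ∑ a ∈ s, t a := by
    rcases Finset.eq_empty_or_nonempty s with rfl | hs
    · simp [htb]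
    · have hn0 : n ≠ 0 := by
        simp only [hn]
        exact Nat.cast_ne_zero.mpr (Finset.card_pos.mpr hs).ne'
      rw [htb, mul_div_cancel₀ _ hn0]
  calc ∑ a ∈ s, (c - t a) ^ 2
      = ∑ a ∈ s, ((c - tb) ^ 2 + (t a - tb) ^ 2 + 2 * (c - tb) * (tb - t a)) := by
        apply Finset.sum_congr rfl; intro a _; ring
    _ = n * (c - tb) ^ 2 + ∑ a ∈ s, (t a - tb) ^ 2
          + 2 * (c - tb) * (n * tb - ∑ a ∈ s, t a) := by
        rw [Finset.sum_add_distrib, Finset.sum_add_distrib, Finset.sum_const,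
          nsmul_eq_mul, ← Finset.mul_sum, Finset.sum_sub_distrib, Finset.sum_const,
          nsmul_eq_mul]
    _ = n * (c - tb) ^ 2 + ∑ a ∈ s, (t a - tb) ^ 2 := by rw [h]; ring

/-- Strict midpoint inequality for `|·| ^ p`, `1 < p`. -/
lemma abs_rpow_midpoint (p : ℝ) (hp : 1 < p) (x y : ℝ) (hxy : x ≠ y) :
    |(x + y) / 2| ^ p < (|x| ^ p + |y| ^ p) / 2 := by
  have hp0 : (0 : ℝ) < p := by linarith
  by_cases h : |x| = |y|
  · have hx0 : x ≠ 0 := by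
      rintro rfl
      have : y = 0 := by simpa [abs_eq_zero] using h.symm
      exact hxy (by simp [this])
    have hxy' : x = -y := by
      rcases abs_eq_abs.mp h with h1 | h1
      · exact absurd h1 hxy
      · exact h1
    have hmid : (x + y) / 2 = 0 := by rw [hxy']; ring
    rw [hmid, abs_zero, Real.zero_rpow hp0.ne']
    have h1 : 0 < |x| ^ p := Real.rpow_pos_of_pos (abs_pos.mpr hx0) p
    rw [← h]
    linarith
  · have key := (strictConvexOn_rpow hp).2 (Set.mem_Ici.mpr (abs_nonneg x))
      (Set.mem_Ici.mpr (abs_nonneg y)) h (by norm_num : (0:ℝ) < 1/2)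
      (by norm_num : (0:ℝ) < 1/2) (by norm_num)
    simp only [smul_eq_mul] at key
    have h1 : |(x + y) / 2| ≤ 1/2 * |x| + 1/2 * |y| := by
      calc |(x + y) / 2| = |x + y| / 2 := by rw [abs_div]; norm_num
        _ ≤ (|x| + |y|) / 2 := by
            have := abs_add_le x y; linarith
        _ = 1/2 * |x| + 1/2 * |y| := by ring
    have h2 : |(x + y) / 2| ^ p ≤ (1/2 * |x| + 1/2 * |y|) ^ p :=
      Real.rpow_le_rpow (abs_nonneg _) h1 hp0.le
    calc |(x + y) / 2| ^ p ≤ (1/2 * |x| + 1/2 * |y|) ^ p := h2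
      _ < 1/2 * |x| ^ p + 1/2 * |y| ^ p := key
      _ = (|x| ^ p + |y| ^ p) / 2 := by ring

/-- Uniqueness of the scalar `p`-barycenter for `1 < p`. -/
lemma pbary_unique (N : ℕ) (hN : N ≠ 0) (p : ℝ) (hp : 1 < p)
    (lam : Fin N → ℝ) (hlam : ∀ i, 0 < lam i) (ζ : Fin N → ℝ) (s t : ℝ)
    (hs : ∀ u : ℝ, ∑ i, lam i * |ζ i - s| ^ p ≤ ∑ i, lam i * |ζ i - u| ^ p)
    (ht : ∀ u : ℝ, ∑ i, lam i * |ζ i - t| ^ p ≤ ∑ i, lam i * |ζ i - u| ^ p) :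
    s = t := by
  by_contra hst
  have hne : (Finset.univ : Finset (Fin N)).Nonempty := by
    haveI : NeZero N := ⟨hN⟩
    exact Finset.univ_nonempty
  have key : ∑ i, lam i * |ζ i - (s + t) / 2| ^ p
      < (∑ i, lam i * |ζ i - s| ^ p + ∑ i, lam i * |ζ i - t| ^ p) / 2 := by
    calc ∑ i, lam i * |ζ i - (s + t) / 2| ^ p
        < ∑ i, lam i * ((|ζ i - s| ^ p + |ζ i - t| ^ p) / 2) := by
          apply Finset.sum_lt_sum_of_nonempty hne
          intro i _
          apply mul_lt_mul_of_pos_left _ (hlam i)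
          have h1 : ζ i - (s + t) / 2 = ((ζ i - s) + (ζ i - t)) / 2 := by ring
          rw [h1]
          exact abs_rpow_midpoint p hp _ _ (by intro h; apply hst; linarith)
      _ = (∑ i, lam i * |ζ i - s| ^ p + ∑ i, lam i * |ζ i - t| ^ p) / 2 := by
          rw [← Finset.sum_add_distrib, Finset.sum_div]
          apply Finset.sum_congr rfl; intro i _; ring
  have h1 := hs ((s + t) / 2)
  have h2 := ht ((s + t) / 2)
  linarith

/-- The Frobenius `p`-barycenter of block matrices `diag(Id_k, ζᵢ Id_{d-k})` is
`diag(Id_k, ζ̄ Id_{d-k})` with `ζ̄` the scalar `p`-barycenter of the `ζᵢ`. -/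
theorem matrix_pbarycenter_block
    (d k N : ℕ) (hk : k ≤ d) (p : ℝ) (hp : 1 < p)
    (lam : Fin N → ℝ) (hlam : ∀ i, 0 < lam i) (hsum : ∑ i, lam i = 1)
    (ζ : Fin N → ℝ) (hζ : ∀ i, 0 ≤ ζ i)
    (A : Fin N → Matrix (Fin d) (Fin d) ℝ)
    (hA : ∀ i, A i = Matrix.of (fun a b : Fin d =>
      if a = b then (if (a : ℕ) < k then (1 : ℝ) else ζ i) else 0))
    (frob : Matrix (Fin d) (Fin d) ℝ → ℝ)
    (hfrob : ∀ M, frob M = Real.sqrt (∑ a, ∑ b, (M a b) ^ 2))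
    (ζbar : ℝ)
    (hζbar : ∀ t : ℝ, ∑ i, lam i * |ζ i - ζbar| ^ p ≤ ∑ i, lam i * |ζ i - t| ^ p)
    (Bbar : Matrix (Fin d) (Fin d) ℝ)
    (hBbar : Bbar = Matrix.of (fun a b : Fin d =>
      if a = b then (if (a : ℕ) < k then (1 : ℝ) else ζbar) else 0)) :
    (∀ B, ∑ i, lam i * frob (A i - Bbar) ^ p ≤ ∑ i, lam i * frob (A i - B) ^ p) ∧
    (∀ B, (∀ B', ∑ i, lam i * frob (A i - B) ^ p ≤ ∑ i, lam i * frob (A i - B') ^ p)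
      → B = Bbar) := by
  have hN : N ≠ 0 := by
    rintro rfl
    simp at hsum
  have hp0 : (0 : ℝ) < p := by linarith
  -- index sets
  set Sk : Finset (Fin d) := Finset.univ.filter (fun a : Fin d => (a : ℕ) < k) with hSk
  set S : Finset (Fin d) := Finset.univ.filter (fun a : Fin d => ¬ (a : ℕ) < k) with hSdef
  set m : ℝ := (S.card : ℝ) with hm
  have hm0 : 0 ≤ m := by positivity
  -- auxiliary quantities
  set Roff : Matrix (Fin d) (Fin d) ℝ → ℝ :=
    fun B => ∑ a, ∑ b ∈ Finset.univ.erase a, (B a b) ^ 2 with hRoff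
  set R1 : Matrix (Fin d) (Fin d) ℝ → ℝ :=
    fun B => ∑ a ∈ Sk, (1 - B a a) ^ 2 with hR1
  set tb : Matrix (Fin d) (Fin d) ℝ → ℝ :=
    fun B => (∑ a ∈ S, B a a) / m with htb
  set W : Matrix (Fin d) (Fin d) ℝ → ℝ :=
    fun B => ∑ a ∈ S, (B a a - tb B) ^ 2 with hW
  have hRoff0 : ∀ B, 0 ≤ Roff B := fun B =>
    Finset.sum_nonneg fun a _ => Finset.sum_nonneg fun b _ => sq_nonneg _
  have hR10 : ∀ B, 0 ≤ R1 B := fun B => Finset.sum_nonneg fun a _ => sq_nonneg _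
  have hW0 : ∀ B, 0 ≤ W B := fun B => Finset.sum_nonneg fun a _ => sq_nonneg _
  -- computation of the squared Frobenius norm
  have hEsum : ∀ (i : Fin N) (B : Matrix (Fin d) (Fin d) ℝ),
      ∑ a, ∑ b, ((A i - B) a b) ^ 2
        = Roff B + R1 B + ∑ a ∈ S, (ζ i - B a a) ^ 2 := by
    intro i B
    rw [hA i]
    have hinner : ∀ a : Fin d,
        ∑ b, ((Matrix.of (fun a b : Fin d =>
            if a = b then (if (a : ℕ) < k then (1 : ℝ) else ζ i) else 0) - B) a b) ^ 2
          = ((if (a : ℕ) < k then (1 : ℝ) else ζ i) - B a a) ^ 2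
            + ∑ b ∈ Finset.univ.erase a, (B a b) ^ 2 := by
      intro a
      rw [← Finset.add_sum_erase _ _ (Finset.mem_univ a)]
      congr 1
      · simp [Matrix.sub_apply]
      · apply Finset.sum_congr rfl
        intro b hb
        have hba : a ≠ b := fun h => (Finset.mem_erase.mp hb).1 h.symm
        simp [Matrix.sub_apply, hba]
    calc ∑ a, ∑ b, ((Matrix.of (fun a b : Fin d =>
            if a = b then (if (a : ℕ) < k then (1 : ℝ) else ζ i) else 0) - B) a b) ^ 2
        = ∑ a : Fin d, (((if (a : ℕ) < k then (1 : ℝ) else ζ i) - B a a) ^ 2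
            + ∑ b ∈ Finset.univ.erase a, (B a b) ^ 2) :=
          Finset.sum_congr rfl fun a _ => hinner a
      _ = ∑ a : Fin d, ((if (a : ℕ) < k then (1 : ℝ) else ζ i) - B a a) ^ 2 + Roff B := by
          rw [Finset.sum_add_distrib]
      _ = Roff B + R1 B + ∑ a ∈ S, (ζ i - B a a) ^ 2 := by
          rw [← Finset.sum_filter_add_sum_filter_not Finset.univ
            (fun a : Fin d => (a : ℕ) < k)]
          have h1 : ∑ a ∈ Sk, ((if (a : ℕ) < k then (1 : ℝ) else ζ i) - B a a) ^ 2
              = R1 B := by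
            apply Finset.sum_congr rfl
            intro a ha
            have : (a : ℕ) < k := (Finset.mem_filter.mp ha).2
            rw [if_pos this]
          have h2 : ∑ a ∈ S, ((if (a : ℕ) < k then (1 : ℝ) else ζ i) - B a a) ^ 2
              = ∑ a ∈ S, (ζ i - B a a) ^ 2 := by
            apply Finset.sum_congr rfl
            intro a ha
            have : ¬ (a : ℕ) < k := (Finset.mem_filter.mp ha).2
            rw [if_neg this]
          rw [h1, h2]; ring
  -- refined formula using the mean of diagonal entries on S
  have hfrobB : ∀ (i : Fin N) (B : Matrix (Fin d) (Fin d) ℝ),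
      frob (A i - B)
        = Real.sqrt (Roff B + R1 B + W B + m * (ζ i - tb B) ^ 2) := by
    intro i B
    rw [hfrob, hEsum i B, sum_sq_decomp S (fun a => B a a) (ζ i)]
    apply congrArg
    simp only [htb, hW, hm]
    ring
  set K : ℝ := Real.sqrt m ^ p with hK
  have hK0 : 0 ≤ K := Real.rpow_nonneg (Real.sqrt_nonneg m) p
  have hsqrtm : ∀ c : ℝ, Real.sqrt (m * c ^ 2) = Real.sqrt m * |c| := by
    intro c
    rw [Real.sqrt_mul hm0, Real.sqrt_sq_eq_abs]
  -- lower bound for general B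
  have hlow : ∀ (i : Fin N) (B : Matrix (Fin d) (Fin d) ℝ),
      K * |ζ i - tb B| ^ p ≤ frob (A i - B) ^ p := by
    intro i B
    rw [hfrobB i B, ← Real.mul_rpow (Real.sqrt_nonneg m) (abs_nonneg _), ← hsqrtm]
    apply Real.rpow_le_rpow (Real.sqrt_nonneg _) _ hp0.le
    apply Real.sqrt_le_sqrt
    have h1 := hRoff0 B; have h2 := hR10 B; have h3 := hW0 B
    linarith
  -- value at Bbar
  have hBbarDiag : ∀ a ∈ S, Bbar a a = ζbar := by
    intro a ha
    have hak : ¬ (a : ℕ) < k := (Finset.mem_filter.mp ha).2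
    rw [hBbar]
    simp [hak]
  have hBbarval : ∀ i : Fin N, frob (A i - Bbar) ^ p = K * |ζ i - ζbar| ^ p := by
    intro i
    have hRoffBbar : Roff Bbar = 0 := by
      apply Finset.sum_eq_zero
      intro a _
      apply Finset.sum_eq_zero
      intro b hb
      have hab : ¬ a = b := fun h => (Finset.mem_erase.mp hb).1 h.symm
      rw [hBbar]
      simp [hab]
    have hR1Bbar : R1 Bbar = 0 := by
      apply Finset.sum_eq_zero
      intro a ha
      have hak : (a : ℕ) < k := (Finset.mem_filter.mp ha).2
      rw [hBbar]
      simp [hak]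
    have hSsum : ∑ a ∈ S, (ζ i - Bbar a a) ^ 2 = m * (ζ i - ζbar) ^ 2 := by
      rw [Finset.sum_congr rfl (fun a ha => by rw [hBbarDiag a ha]),
        Finset.sum_const, nsmul_eq_mul, hm]
    rw [hfrob, hEsum i Bbar, hRoffBbar, hR1Bbar, hSsum, zero_add, zero_add, hsqrtm,
      Real.mul_rpow (Real.sqrt_nonneg m) (abs_nonneg _), hK]
  have hvalBbar : ∑ i, lam i * frob (A i - Bbar) ^ p
      = K * ∑ i, lam i * |ζ i - ζbar| ^ p := by
    rw [Finset.mul_sum]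
    apply Finset.sum_congr rfl
    intro i _
    rw [hBbarval i]; ring
  -- the main lower bound chain for general B
  have hchain : ∀ B : Matrix (Fin d) (Fin d) ℝ,
      ∑ i, lam i * frob (A i - Bbar) ^ p
        ≤ ∑ i, lam i * (K * |ζ i - tb B| ^ p)
      ∧ ∑ i, lam i * (K * |ζ i - tb B| ^ p) ≤ ∑ i, lam i * frob (A i - B) ^ p := by
    intro B
    constructor
    · rw [hvalBbar]
      have h1 : ∑ i, lam i * (K * |ζ i - tb B| ^ p)
          = K * ∑ i, lam i * |ζ i - tb B| ^ p := by
        rw [Finset.mul_sum]; apply Finset.sum_congr rfl; intro i _; ring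
      rw [h1]
      exact mul_le_mul_of_nonneg_left (hζbar (tb B)) hK0
    · apply Finset.sum_le_sum
      intro i _
      exact mul_le_mul_of_nonneg_left (hlow i B) (hlam i).le
  constructor
  · intro B
    exact le_trans (hchain B).1 (hchain B).2
  · -- uniqueness
    intro B hB
    have h1 : ∑ i, lam i * frob (A i - B) ^ p ≤ ∑ i, lam i * frob (A i - Bbar) ^ p :=
      hB Bbar
    have h2 := (hchain B).1
    have h3 := (hchain B).2
    have heqsum : ∑ i, lam i * (K * |ζ i - tb B| ^ p)
        = ∑ i, lam i * frob (A i - B) ^ p := le_antisymm h3 (by linarith)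
    have heq2 : ∑ i, lam i * frob (A i - Bbar) ^ p
        = ∑ i, lam i * (K * |ζ i - tb B| ^ p) := le_antisymm h2 (by linarith)
    -- termwise equality
    have hterm : ∀ i ∈ (Finset.univ : Finset (Fin N)),
        lam i * (K * |ζ i - tb B| ^ p) = lam i * frob (A i - B) ^ p :=
      (Finset.sum_eq_sum_iff_of_le (fun i _ =>
        mul_le_mul_of_nonneg_left (hlow i B) (hlam i).le)).mp heqsum
    set i₀ : Fin N := ⟨0, Nat.pos_of_ne_zero hN⟩ with hi₀
    have hterm0 : K * |ζ i₀ - tb B| ^ p = frob (A i₀ - B) ^ p :=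
      mul_left_cancel₀ (hlam i₀).ne' (hterm i₀ (Finset.mem_univ i₀))
    -- deduce that the residual is zero
    have hres : Roff B + R1 B + W B = 0 := by
      by_contra hne
      have hpos : 0 < Roff B + R1 B + W B := by
        have h1 := hRoff0 B; have h2 := hR10 B; have h3 := hW0 B
        rcases lt_or_eq_of_le (by linarith : (0:ℝ) ≤ Roff B + R1 B + W B) with h | h
        · exact h
        · exact absurd h.symm hne
      have hx0 : 0 ≤ m * (ζ i₀ - tb B) ^ 2 := by positivity
      have hlt : Real.sqrt (m * (ζ i₀ - tb B) ^ 2)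
          < Real.sqrt (Roff B + R1 B + W B + m * (ζ i₀ - tb B) ^ 2) :=
        Real.sqrt_lt_sqrt hx0 (by linarith)
      have hlt2 : Real.sqrt (m * (ζ i₀ - tb B) ^ 2) ^ p
          < Real.sqrt (Roff B + R1 B + W B + m * (ζ i₀ - tb B) ^ 2) ^ p :=
        Real.rpow_lt_rpow (Real.sqrt_nonneg _) hlt hp0
      rw [← hfrobB i₀ B] at hlt2
      rw [← hterm0] at hlt2
      rw [hsqrtm, Real.mul_rpow (Real.sqrt_nonneg m) (abs_nonneg _), ← hK] at hlt2
      exact lt_irrefl _ hlt2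
    have hRoffB : Roff B = 0 := by
      have h1 := hRoff0 B; have h2 := hR10 B; have h3 := hW0 B; linarith
    have hR1B : R1 B = 0 := by
      have h1 := hRoff0 B; have h2 := hR10 B; have h3 := hW0 B; linarith
    have hWB : W B = 0 := by
      have h1 := hRoff0 B; have h2 := hR10 B; have h3 := hW0 B; linarith
    -- off-diagonal entries vanish
    have hoff : ∀ a b : Fin d, a ≠ b → B a b = 0 := by
      intro a b hab
      have h1 : ∀ a' ∈ (Finset.univ : Finset (Fin d)),
          ∑ b' ∈ Finset.univ.erase a', (B a' b') ^ 2 = 0 :=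
        (Finset.sum_eq_zero_iff_of_nonneg (fun a' _ =>
          Finset.sum_nonneg fun b' _ => sq_nonneg _)).mp hRoffB
      have h2 : ∀ b' ∈ Finset.univ.erase a, (B a b') ^ 2 = 0 :=
        (Finset.sum_eq_zero_iff_of_nonneg (fun b' _ => sq_nonneg _)).mp
          (h1 a (Finset.mem_univ a))
      have h3 := h2 b (Finset.mem_erase.mpr ⟨hab.symm, Finset.mem_univ b⟩)
      exact pow_eq_zero_iff (two_ne_zero) |>.mp h3
    -- first-block diagonal entries are 1
    have hdiag1 : ∀ a : Fin d, (a : ℕ) < k → B a a = 1 := by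
      intro a hak
      have h1 : ∀ a' ∈ Sk, (1 - B a' a') ^ 2 = 0 :=
        (Finset.sum_eq_zero_iff_of_nonneg (fun a' _ => sq_nonneg _)).mp hR1B
      have h2 := h1 a (Finset.mem_filter.mpr ⟨Finset.mem_univ a, hak⟩)
      have h3 := pow_eq_zero_iff (two_ne_zero) |>.mp h2
      linarith
    -- second-block diagonal entries equal tb B, and tb B = ζbar
    have hdiag2 : ∀ a : Fin d, ¬ (a : ℕ) < k → B a a = ζbar := by
      intro a hak
      have haS : a ∈ S := Finset.mem_filter.mpr ⟨Finset.mem_univ a, hak⟩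
      have h1 : ∀ a' ∈ S, (B a' a' - tb B) ^ 2 = 0 :=
        (Finset.sum_eq_zero_iff_of_nonneg (fun a' _ => sq_nonneg _)).mp hWB
      have h2 := pow_eq_zero_iff (two_ne_zero) |>.mp (h1 a haS)
      have hBaa : B a a = tb B := by linarith
      -- m > 0, hence K > 0
      have hmpos : 0 < m := by
        rw [hm]
        exact_mod_cast Finset.card_pos.mpr ⟨a, haS⟩
      have hKpos : 0 < K :=
        Real.rpow_pos_of_pos (Real.sqrt_pos.mpr hmpos) p
      -- φ(tb B) = φ(ζbar)
      have hφeq : ∑ i, lam i * |ζ i - tb B| ^ p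
          = ∑ i, lam i * |ζ i - ζbar| ^ p := by
        have h4 : K * ∑ i, lam i * |ζ i - tb B| ^ p
            = K * ∑ i, lam i * |ζ i - ζbar| ^ p := by
          have h5 : ∑ i, lam i * (K * |ζ i - tb B| ^ p)
              = K * ∑ i, lam i * |ζ i - tb B| ^ p := by
            rw [Finset.mul_sum]; apply Finset.sum_congr rfl; intro i _; ring
          rw [← h5, ← heq2, hvalBbar]
        exact mul_left_cancel₀ hKpos.ne' h4
      have htbmin : ∀ u : ℝ, ∑ i, lam i * |ζ i - tb B| ^ p
          ≤ ∑ i, lam i * |ζ i - u| ^ p := by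
        intro u
        rw [hφeq]
        exact hζbar u
      have := pbary_unique N hN p hp lam hlam ζ (tb B) ζbar htbmin hζbar
      rw [hBaa, this]
    -- conclude B = Bbar
    ext a b
    rw [hBbar]
    simp only [Matrix.of_apply]
    by_cases hab : a = b
    · subst hab
      rw [if_pos rfl]
      by_cases hak : (a : ℕ) < k
      · rw [if_pos hak]; exact hdiag1 a hak
      · rw [if_neg hak]; exact hdiag2 a hak
    · rw [if_neg hab]; exact hoff a b hab
end
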